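/- Fix n_0 ≥ 1. (i) For every p ∈ [1, ∞), every f ∈ L^p(ℝ^{n_0}) and every ε > 0 there is a function g computed by a ReLU network with input dimension n_0, output dimension 1 and all hidden layers of width 2n_0 + 6 such that ‖f − g‖_{L^p(ℝ^{n_0})} < ε. (ii) For every compact set K ⊂ ℝ^{n_0}, every continuous f : K → ℝ and every ε > 0 there is a function g computed by such a network with sup_{x ∈ K} |f(x) − g(x)| < ε. -/

import Mathlib

open scoped BigOperators
open MeasureTheory

noncomputable section

/-- The ReLU activation function. -/
def relu (x : ℝ) : ℝ := max x 0

/-- `f : ℝ^n → ℝ^m` is an affine map. -/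
def IsAffineMap {n m : ℕ} (f : (Fin n → ℝ) → Fin m → ℝ) : Prop :=
  ∃ (A : Matrix (Fin m) (Fin n) ℝ) (b : Fin m → ℝ),
    ∀ x i, f x i = (∑ j, A i j * x j) + b i

/-- `f : ℝ^n → ℝ^m` is an affine map all of whose coefficients have absolute value ≤ c. -/
def IsAffineMapB (c : ℝ) {n m : ℕ} (f : (Fin n → ℝ) → Fin m → ℝ) : Prop :=
  ∃ (A : Matrix (Fin m) (Fin n) ℝ) (b : Fin m → ℝ),
    (∀ i j, |A i j| ≤ c) ∧ (∀ i, |b i| ≤ c) ∧ ∀ x i, f x i = (∑ j, A i j * x j) + b i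

/-- `ComputesA ρ n hidden m f` : `f` is computed by a feedforward network with activation
function `ρ`, input dimension `n`, hidden layer widths `hidden` and output dimension `m`. -/
inductive ComputesA (ρ : ℝ → ℝ) :
    ∀ (n : ℕ), List ℕ → ∀ (m : ℕ), ((Fin n → ℝ) → Fin m → ℝ) → Prop
  | nil {n m : ℕ} (f : (Fin n → ℝ) → Fin m → ℝ) (hf : IsAffineMap f) :
      ComputesA ρ n [] m f
  | cons {n w m : ℕ} {ws : List ℕ} (f₀ : (Fin n → ℝ) → Fin w → ℝ)
      (g : (Fin w → ℝ) → Fin m → ℝ) (hf : IsAffineMap f₀)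
      (hg : ComputesA ρ w ws m g) :
      ComputesA ρ n (w :: ws) m (fun x => g (fun i => ρ (f₀ x i)))

/-- Same as `ComputesA` but all coefficients of all affine maps are bounded by `c`. -/
inductive ComputesAB (ρ : ℝ → ℝ) (c : ℝ) :
    ∀ (n : ℕ), List ℕ → ∀ (m : ℕ), ((Fin n → ℝ) → Fin m → ℝ) → Prop
  | nil {n m : ℕ} (f : (Fin n → ℝ) → Fin m → ℝ) (hf : IsAffineMapB c f) :
      ComputesAB ρ c n [] m f
  | cons {n w m : ℕ} {ws : List ℕ} (f₀ : (Fin n → ℝ) → Fin w → ℝ)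
      (g : (Fin w → ℝ) → Fin m → ℝ) (hf : IsAffineMapB c f₀)
      (hg : ComputesAB ρ c w ws m g) :
      ComputesAB ρ c n (w :: ws) m (fun x => g (fun i => ρ (f₀ x i)))

/-- `f` is computed by a ReLU network of design `(n, hidden…, m)`. -/
def Computes (n : ℕ) (hidden : List ℕ) (m : ℕ) (f : (Fin n → ℝ) → Fin m → ℝ) : Prop :=
  ComputesA relu n hidden m f

/-- `R` is a linear region of `f` : an open connected set on which `f` is affine,
maximal in the sense that `f` is not affine on any strictly larger open set. -/
def IsLinearRegion {n m : ℕ} (f : (Fin n → ℝ) → Fin m → ℝ) (R : Set (Fin n → ℝ)) : Prop :=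
  IsOpen R ∧ IsConnected R ∧ (∃ g, IsAffineMap g ∧ Set.EqOn f g R) ∧
    ∀ R' : Set (Fin n → ℝ), IsOpen R' → R ⊂ R' →
      ¬ ∃ g, IsAffineMap g ∧ Set.EqOn f g R'

/-- The number of linear regions of `f`. -/
def numRegions {n m : ℕ} (f : (Fin n → ℝ) → Fin m → ℝ) : ℕ :=
  {R | IsLinearRegion f R}.ncard

/-- `R(n, hidden…, m)` : the maximal number of linear regions of a function computed by a
ReLU network of design `(n, hidden…, m)`. -/
def maxRegions (n : ℕ) (hidden : List ℕ) (m : ℕ) : ℕ :=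
  sSup {k | ∃ f : (Fin n → ℝ) → Fin m → ℝ, Computes n hidden m f ∧ numRegions f = k}

/-- `f` is piecewise affine: continuous, finitely many linear regions, whose closures cover. -/
def IsPiecewiseAffine {n m : ℕ} (f : (Fin n → ℝ) → Fin m → ℝ) : Prop :=
  Continuous f ∧ {R | IsLinearRegion f R}.Finite ∧
    (⋃ R ∈ {R | IsLinearRegion f R}, closure R) = Set.univ

/-! Shallow ReLU networks `x ↦ ∑ cᵢ relu (ℓᵢ x + bᵢ)` are uniformly dense in `C(K)`: on an
interval every continuous function is a uniform limit of piecewise-linear interpolants, hence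
every ridge function `x ↦ exp (ℓ x)` is approximable, and these span a point-separating
subalgebra (Stone–Weierstrass).

A network of width `2n + 6` carries its input through every layer as `(relu x, relu (-x))`
and uses its remaining six neurons as nonnegative registers. Adding one neuron of a shallow
network to a register costs three layers, so shallow networks are computed exactly, and so is
`clamp (relu w) u = max (-relu w) (min u (relu w))` for shallow `u` and `w`.

For `L^p`, approximate `f` by a continuous compactly supported `g` and `g` uniformly by a
shallow `u` on a ball around its support; clamping `u` by a cutoff `w` that vanishes outside
the ball and dominates `|g|` inside it makes the error vanish outside the ball without
increasing it inside. -/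

lemma relu_nonneg (x : ℝ) : 0 ≤ relu x := le_max_right _ _

lemma le_relu (x : ℝ) : x ≤ relu x := le_max_left _ _

lemma relu_of_nonneg {x : ℝ} (h : 0 ≤ x) : relu x = x := max_eq_left h

lemma relu_of_nonpos {x : ℝ} (h : x ≤ 0) : relu x = 0 := max_eq_right h

lemma relu_sub_relu_neg (x : ℝ) : relu x - relu (-x) = x := by
  rcases le_total x 0 with h | h
  · rw [relu_of_nonpos h, relu_of_nonneg (neg_nonneg.2 h)]; ring
  · rw [relu_of_nonneg h, relu_of_nonpos (neg_nonpos.2 h)]; ring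

lemma continuous_relu : Continuous relu := continuous_id.max continuous_const

lemma relu_comp_of_nonneg {ι : Type*} {r : ι → ℝ} (hr : 0 ≤ r) : relu ∘ r = r :=
  funext fun j => relu_of_nonneg (hr j)

def clamp (φ u : ℝ) : ℝ := max (-φ) (min u φ)

lemma clamp_cases {φ : ℝ} (hφ : 0 ≤ φ) (u : ℝ) :
    (φ ≤ u ∧ clamp φ u = φ) ∨ (-φ ≤ u ∧ u ≤ φ ∧ clamp φ u = u) ∨
      (u ≤ -φ ∧ clamp φ u = -φ) := by
  unfold clamp
  rcases le_total φ u with h | h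
  · exact .inl ⟨h, by rw [min_eq_right h, max_eq_right (by linarith)]⟩
  rcases le_total (-φ) u with h' | h'
  · exact .inr (.inl ⟨h', h, by rw [min_eq_left h, max_eq_right h']⟩)
  · exact .inr (.inr ⟨h', by rw [min_eq_left h, max_eq_left h']⟩)

lemma relu_two_mul_sub_relu_sub_sub {φ : ℝ} (hφ : 0 ≤ φ) (u : ℝ) :
    relu (2 * φ - relu (φ - u)) - φ = clamp φ u := by
  rcases clamp_cases hφ u with ⟨h, hc⟩ | ⟨h₁, h₂, hc⟩ | ⟨h, hc⟩ <;> rw [hc]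
  · rw [relu_of_nonpos (x := φ - u) (by linarith), relu_of_nonneg (by linarith)]; ring
  · rw [relu_of_nonneg (x := φ - u) (by linarith), relu_of_nonneg (by linarith)]; ring
  · rw [relu_of_nonneg (x := φ - u) (by linarith), relu_of_nonpos (by linarith)]; ring

lemma clamp_zero (u : ℝ) : clamp 0 u = 0 := by simp [clamp]

lemma abs_sub_clamp_le {φ u v : ℝ} (hv : |v| ≤ φ) : |v - clamp φ u| ≤ |v - u| := by
  obtain ⟨h₁, h₂⟩ := abs_le.1 hv
  have := neg_abs_le (v - u)
  have := le_abs_self (v - u)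
  rcases clamp_cases ((abs_nonneg v).trans hv) u with ⟨h, hc⟩ | ⟨-, -, hc⟩ | ⟨h, hc⟩ <;>
    rw [hc] <;> exact abs_le.2 ⟨by linarith, by linarith⟩

section Networks

variable {n m : ℕ}

lemma isAffineMap_of_forall {f : (Fin n → ℝ) → Fin m → ℝ}
    (hf : ∀ i, ∃ (ℓ : (Fin n → ℝ) →ₗ[ℝ] ℝ) (b : ℝ), ∀ x, f x i = ℓ x + b) :
    IsAffineMap f := by
  choose ℓ b hf using hf
  refine ⟨fun i j => ℓ i (Pi.single j 1), b, fun x i => ?_⟩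
  rw [hf, LinearMap.pi_apply_eq_sum_univ (ℓ i) x]
  simp only [smul_eq_mul, mul_comm]
  congr 1
  refine Finset.sum_congr rfl fun j _ => ?_
  congr 2
  ext k
  simp [Pi.single_apply, eq_comm]

lemma IsAffineMap.continuous {f : (Fin n → ℝ) → Fin m → ℝ} (hf : IsAffineMap f) :
    Continuous f := by
  obtain ⟨A, b, hf⟩ := hf
  rw [show f = fun x i => (∑ j, A i j * x j) + b i from funext₂ hf]
  fun_prop

lemma ComputesA.continuous {ρ : ℝ → ℝ} (hρ : Continuous ρ) {ws : List ℕ}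
    {f : (Fin n → ℝ) → Fin m → ℝ} (hf : ComputesA ρ n ws m f) : Continuous f := by
  induction hf with
  | nil f hf => exact hf.continuous
  | cons f₀ g hf₀ _ ih =>
    exact ih.comp (continuous_pi fun i => hρ.comp ((continuous_apply i).comp hf₀.continuous))

def ComputableWithWidth (w : ℕ) (g : (Fin n → ℝ) → ℝ) : Prop :=
  ∃ (L : ℕ) (h : (Fin n → ℝ) → Fin 1 → ℝ),
    Computes n (List.replicate L w) 1 h ∧ ∀ x, h x 0 = g x

lemma ComputableWithWidth.continuous {w : ℕ} {g : (Fin n → ℝ) → ℝ}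
    (hg : ComputableWithWidth w g) : Continuous g := by
  obtain ⟨L, h, hh, hg⟩ := hg
  rw [← funext hg]
  exact (continuous_apply 0).comp (ComputesA.continuous continuous_relu hh)

end Networks

section RegisterMachine

variable {n m : ℕ}

lemma comp_finAppend {α β : Type*} {k l : ℕ} (φ : α → β) (u : Fin k → α) (v : Fin l → α) :
    φ ∘ Fin.append u v = Fin.append (φ ∘ u) (φ ∘ v) := by
  ext i
  refine Fin.addCases (fun i => ?_) (fun i => ?_) i <;> simp

/-- The hidden state of a network of width `2n + m` simulating `m` registers `r` on input `x`.
Both halves of `x` survive a ReLU, and so does `r` as long as it is nonnegative. -/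
def encode (x : Fin n → ℝ) (r : Fin m → ℝ) : Fin (n + (n + m)) → ℝ :=
  Fin.append (relu ∘ x) (Fin.append (relu ∘ (-x)) r)

lemma exists_isAffineMap_comp_encode {k : ℕ} (F : (Fin n → ℝ) → (Fin m → ℝ) → Fin k → ℝ)
    (hF : ∀ i, ∃ (ℓ : (Fin n → ℝ) →ₗ[ℝ] ℝ) (ℓ' : (Fin m → ℝ) →ₗ[ℝ] ℝ) (b : ℝ),
      ∀ x r, F x r i = ℓ x + ℓ' r + b) :
    ∃ f, IsAffineMap f ∧ ∀ x r, f (encode x r) = F x r := by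
  choose ℓ ℓ' b hF using hF
  let pos : (Fin (n + (n + m)) → ℝ) →ₗ[ℝ] Fin n → ℝ :=
    LinearMap.funLeft ℝ ℝ (Fin.castAdd _)
  let neg : (Fin (n + (n + m)) → ℝ) →ₗ[ℝ] Fin n → ℝ :=
    LinearMap.funLeft ℝ ℝ (Fin.natAdd n ∘ Fin.castAdd m)
  let reg : (Fin (n + (n + m)) → ℝ) →ₗ[ℝ] Fin m → ℝ :=
    LinearMap.funLeft ℝ ℝ (Fin.natAdd n ∘ Fin.natAdd n)
  refine ⟨fun v i => (ℓ i ∘ₗ (pos - neg) + ℓ' i ∘ₗ reg) v + b i,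
    isAffineMap_of_forall fun i => ⟨_, b i, fun _ => rfl⟩, fun x r => funext fun i => ?_⟩
  have hx : (pos - neg) (encode x r) = x := funext fun j => by
    simpa [pos, neg, encode, LinearMap.funLeft_apply] using relu_sub_relu_neg (x j)
  have hr : reg (encode x r) = r := funext fun j => by
    simp [reg, encode, LinearMap.funLeft_apply]
  simp only [LinearMap.add_apply, LinearMap.comp_apply, hx, hr, hF]

structure RegisterStep (n m : ℕ) where
  k : Fin m
  ℓx : (Fin n → ℝ) →ₗ[ℝ] ℝ
  ℓr : (Fin m → ℝ) →ₗ[ℝ] ℝ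
  b : ℝ

def RegisterStep.exec (s : RegisterStep n m) (x : Fin n → ℝ) (r : Fin m → ℝ) :
    Fin m → ℝ :=
  Function.update r s.k (relu (s.ℓx x + s.ℓr r + s.b))

def runSteps (P : List (RegisterStep n m)) (x : Fin n → ℝ) (r : Fin m → ℝ) :
    Fin m → ℝ :=
  P.foldl (fun r s => s.exec x r) r

@[simp] lemma runSteps_nil (x : Fin n → ℝ) (r : Fin m → ℝ) : runSteps [] x r = r := rfl

@[simp] lemma runSteps_cons (s : RegisterStep n m) (P : List (RegisterStep n m))
    (x : Fin n → ℝ) (r : Fin m → ℝ) : runSteps (s :: P) x r = runSteps P x (s.exec x r) :=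
  rfl

@[simp] lemma runSteps_append (P Q : List (RegisterStep n m)) (x : Fin n → ℝ)
    (r : Fin m → ℝ) : runSteps (P ++ Q) x r = runSteps Q x (runSteps P x r) :=
  List.foldl_append

lemma RegisterStep.exec_nonneg (s : RegisterStep n m) (x : Fin n → ℝ) {r : Fin m → ℝ}
    (hr : 0 ≤ r) : 0 ≤ s.exec x r := by
  intro j
  unfold exec
  rcases eq_or_ne j s.k with rfl | h
  · simpa using relu_nonneg _
  · simpa [h] using hr j

lemma runSteps_nonneg (P : List (RegisterStep n m)) (x : Fin n → ℝ) {r : Fin m → ℝ}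
    (hr : 0 ≤ r) : 0 ≤ runSteps P x r := by
  induction P generalizing r with
  | nil => exact hr
  | cons s P ih => exact ih (s.exec_nonneg x hr)

lemma RegisterStep.exists_layer (s : RegisterStep n m) :
    ∃ f, IsAffineMap f ∧
      ∀ x r, 0 ≤ r → relu ∘ f (encode x r) = encode x (s.exec x r) := by
  obtain ⟨f, hf, hfF⟩ := exists_isAffineMap_comp_encode (k := n + (n + m))
    (fun x r => Fin.append x (Fin.append (-x) (Function.update r s.k (s.ℓx x + s.ℓr r + s.b))))
    fun i => by
      refine Fin.addCases (fun i => ⟨LinearMap.proj i, 0, 0, fun x r => by simp⟩)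
        (Fin.addCases (fun i => ⟨-LinearMap.proj i, 0, 0, fun x r => by simp⟩)
          fun j => ?_) i
      rcases eq_or_ne j s.k with rfl | h
      · exact ⟨s.ℓx, s.ℓr, s.b, fun x r => by simp⟩
      · exact ⟨0, LinearMap.proj j, 0, fun x r => by simp [h]⟩
  refine ⟨f, hf, fun x r hr => ?_⟩
  rw [hfF, comp_finAppend, comp_finAppend, Function.comp_update, relu_comp_of_nonneg hr]
  rfl

lemma exists_computesA_encode (P : List (RegisterStep n m)) (ℓ : (Fin m → ℝ) →ₗ[ℝ] ℝ)
    (b : ℝ) :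
    ∃ G, ComputesA relu (n + (n + m)) (List.replicate P.length (n + (n + m))) 1 G ∧
      ∀ x r, 0 ≤ r → G (encode x r) 0 = ℓ (runSteps P x r) + b := by
  induction P with
  | nil =>
    obtain ⟨G, hG, hGF⟩ := exists_isAffineMap_comp_encode (k := 1) (fun _ r _ => ℓ r + b)
      fun _ => ⟨0, ℓ, b, fun _ _ => by simp⟩
    exact ⟨G, .nil G hG, fun x r _ => by simp [hGF]⟩
  | cons s P ih =>
    obtain ⟨G, hG, hGP⟩ := ih
    obtain ⟨f, hf, hfs⟩ := s.exists_layer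
    refine ⟨fun v => G fun i => relu (f v i), .cons f G hf hG, fun x r hr => ?_⟩
    show G (relu ∘ f (encode x r)) 0 = _
    rw [hfs x r hr, hGP x _ (s.exec_nonneg x hr), runSteps_cons]

theorem computableWithWidth_runSteps (P : List (RegisterStep n m))
    (ℓ : (Fin m → ℝ) →ₗ[ℝ] ℝ) (b : ℝ) :
    ComputableWithWidth (2 * n + m) fun x => ℓ (runSteps P x 0) + b := by
  obtain ⟨G, hG, hGP⟩ := exists_computesA_encode P ℓ b
  have hf₀ : IsAffineMap fun (x : Fin n → ℝ) => Fin.append x (Fin.append (-x) (0 : Fin m → ℝ)) :=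
    isAffineMap_of_forall fun i =>
      Fin.addCases (fun i => ⟨LinearMap.proj i, 0, fun x => by simp⟩)
        (Fin.addCases (fun i => ⟨-LinearMap.proj i, 0, fun x => by simp⟩)
          fun j => ⟨0, 0, fun x => by simp⟩) i
  refine ⟨P.length + 1, fun x => G fun i => relu (Fin.append x (Fin.append (-x) 0) i), ?_,
    fun x => ?_⟩
  · rw [show 2 * n + m = n + (n + m) by ring, List.replicate_succ]
    exact .cons _ G hf₀ hG
  · have h₀ : relu ∘ Fin.append x (Fin.append (-x) (0 : Fin m → ℝ)) = encode x 0 := by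
      rw [comp_finAppend, comp_finAppend, relu_comp_of_nonneg le_rfl, encode]
    exact (congrArg (G · 0) h₀).trans (hGP x 0 le_rfl)

end RegisterMachine

section ShallowNets

variable {E F : Type*} [NormedAddCommGroup E] [NormedSpace ℝ E]
  [NormedAddCommGroup F] [NormedSpace ℝ F]

inductive IsShallowNet : (E → ℝ) → Prop
  | zero : IsShallowNet fun _ => 0
  | add_neuron {u : E → ℝ} (hu : IsShallowNet u) (ℓ : E →L[ℝ] ℝ) (b c : ℝ) :
      IsShallowNet fun x => u x + c * relu (ℓ x + b)

namespace IsShallowNet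

lemma neuron (ℓ : E →L[ℝ] ℝ) (b c : ℝ) : IsShallowNet fun x => c * relu (ℓ x + b) := by
  simpa using zero.add_neuron ℓ b c

lemma const (c : ℝ) : IsShallowNet fun _ : E => c := by
  simpa [relu_of_nonneg zero_le_one] using neuron (E := E) 0 1 c

lemma add {u v : E → ℝ} (hu : IsShallowNet u) (hv : IsShallowNet v) :
    IsShallowNet fun x => u x + v x := by
  induction hv with
  | zero => simpa using hu
  | add_neuron _ ℓ b c ih => simpa only [add_assoc] using ih.add_neuron ℓ b c

lemma const_mul {u : E → ℝ} (hu : IsShallowNet u) (a : ℝ) :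
    IsShallowNet fun x => a * u x := by
  induction hu with
  | zero => simpa using zero
  | add_neuron _ ℓ b c ih => simpa only [mul_add, mul_assoc] using ih.add_neuron ℓ b (a * c)

lemma sum {ι : Type*} (s : Finset ι) {u : ι → E → ℝ} (hu : ∀ i ∈ s, IsShallowNet (u i)) :
    IsShallowNet fun x => ∑ i ∈ s, u i x := by
  classical
  induction s using Finset.induction_on with
  | empty => simpa using zero
  | insert i s hi ih =>
    simp only [Finset.sum_insert hi]
    exact (hu i (s.mem_insert_self i)).add (ih fun j hj => hu j (Finset.mem_insert_of_mem hj))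

lemma comp_affine {u : E → ℝ} (hu : IsShallowNet u) (L : F →L[ℝ] E) (e : E) :
    IsShallowNet fun y => u (L y + e) := by
  induction hu with
  | zero => exact zero
  | add_neuron _ ℓ b c ih => simpa [add_assoc] using ih.add_neuron (ℓ.comp L) (ℓ e + b) c

lemma continuous {u : E → ℝ} (hu : IsShallowNet u) : Continuous u := by
  induction hu with
  | zero => exact continuous_const
  | add_neuron _ ℓ b c ih =>
    exact ih.add (continuous_const.mul (continuous_relu.comp (by fun_prop)))

end IsShallowNet

end ShallowNets

section ShallowNetsAsPrograms

variable {n m : ℕ}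

/-- Adds `c * relu (ℓ x + b)` to `r j₀ - r j₁`, using `jz` as scratch register. The positive
and negative parts of `c` go to different registers so that both stay nonnegative. -/
def neuronSteps (j₀ j₁ jz : Fin m) (ℓ : (Fin n → ℝ) →ₗ[ℝ] ℝ) (b c : ℝ) :
    List (RegisterStep n m) :=
  [⟨jz, ℓ, 0, b⟩, ⟨j₀, 0, LinearMap.proj j₀ + relu c • LinearMap.proj jz, 0⟩,
    ⟨j₁, 0, LinearMap.proj j₁ + relu (-c) • LinearMap.proj jz, 0⟩]

lemma runSteps_neuronSteps {j₀ j₁ jz : Fin m} (h01 : j₀ ≠ j₁) (h0z : j₀ ≠ jz)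
    (h1z : j₁ ≠ jz) (ℓ : (Fin n → ℝ) →ₗ[ℝ] ℝ) (b c : ℝ) (x : Fin n → ℝ) {r : Fin m → ℝ}
    (hr : 0 ≤ r) :
    runSteps (neuronSteps j₀ j₁ jz ℓ b c) x r =
      Function.update (Function.update (Function.update r jz (relu (ℓ x + b)))
        j₀ (r j₀ + relu c * relu (ℓ x + b))) j₁ (r j₁ + relu (-c) * relu (ℓ x + b)) := by
  have hz := relu_nonneg (ℓ x + b)
  simp only [neuronSteps, runSteps_cons, runSteps_nil, RegisterStep.exec]
  simp [Function.update_of_ne, h0z, h0z.symm, h1z, h01.symm,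
    relu_of_nonneg (add_nonneg (hr j₀) (mul_nonneg (relu_nonneg c) hz)),
    relu_of_nonneg (add_nonneg (hr j₁) (mul_nonneg (relu_nonneg (-c)) hz))]

theorem IsShallowNet.exists_steps {u : (Fin n → ℝ) → ℝ} (hu : IsShallowNet u)
    {j₀ j₁ jz : Fin m} (h01 : j₀ ≠ j₁) (h0z : j₀ ≠ jz) (h1z : j₁ ≠ jz) :
    ∃ P : List (RegisterStep n m), ∀ x r, 0 ≤ r →
      runSteps P x r j₀ - runSteps P x r j₁ = r j₀ - r j₁ + u x ∧
      ∀ j, j ≠ j₀ → j ≠ j₁ → j ≠ jz → runSteps P x r j = r j := by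
  induction hu with
  | zero => exact ⟨[], fun x r _ => by simp⟩
  | add_neuron _ ℓ b c ih =>
    obtain ⟨P, hP⟩ := ih
    refine ⟨P ++ neuronSteps j₀ j₁ jz ℓ b c, fun x r hr => ?_⟩
    obtain ⟨hPu, hPj⟩ := hP x r hr
    rw [runSteps_append, runSteps_neuronSteps h01 h0z h1z _ _ _ _ (runSteps_nonneg P x hr)]
    refine ⟨?_, fun j hj₀ hj₁ hjz => ?_⟩
    · simp only [Function.update_self, Function.update_of_ne h01]
      linear_combination hPu + relu (ℓ x + b) * relu_sub_relu_neg c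
    · simp [Function.update_of_ne, hj₀, hj₁, hjz, hPj]

theorem IsShallowNet.computableWithWidth {u : (Fin n → ℝ) → ℝ} (hu : IsShallowNet u) :
    ComputableWithWidth (2 * n + 6) u := by
  obtain ⟨P, hP⟩ := hu.exists_steps (j₀ := (0 : Fin 6)) (j₁ := 1) (jz := 2)
    (by decide) (by decide) (by decide)
  let π : Fin 6 → (Fin 6 → ℝ) →ₗ[ℝ] ℝ := LinearMap.proj
  convert computableWithWidth_runSteps P (π 0 - π 1) 0 using 2 with x
  simp [π, (hP x 0 le_rfl).1]

theorem IsShallowNet.computableWithWidth_clamp {u w : (Fin n → ℝ) → ℝ} (hu : IsShallowNet u)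
    (hw : IsShallowNet w) :
    ComputableWithWidth (2 * n + 6) fun x => clamp (relu (w x)) (u x) := by
  obtain ⟨Pu, hPu⟩ := hu.exists_steps (j₀ := (0 : Fin 6)) (j₁ := 1) (jz := 4)
    (by decide) (by decide) (by decide)
  obtain ⟨Pw, hPw⟩ := hw.exists_steps (j₀ := (2 : Fin 6)) (j₁ := 3) (jz := 4)
    (by decide) (by decide) (by decide)
  let π : Fin 6 → (Fin 6 → ℝ) →ₗ[ℝ] ℝ := LinearMap.proj
  -- with `u = r 0 - r 1` and `w = r 2 - r 3`: `r 5 := relu w`, `r 4 := relu (relu w - u)`,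
  -- `r 2 := relu (2 * relu w - r 4)`; the output `r 2 - r 5` is the clamp
  let clampSteps : List (RegisterStep n 6) :=
    [⟨5, 0, π 2 - π 3, 0⟩, ⟨4, 0, π 5 - π 0 + π 1, 0⟩, ⟨2, 0, (2 : ℝ) • π 5 - π 4, 0⟩]
  convert computableWithWidth_runSteps (Pu ++ Pw ++ clampSteps) (π 2 - π 5) 0 using 2 with x
  obtain ⟨hu₀₁, hu₂₃⟩ := hPu x 0 le_rfl
  obtain ⟨hw₂₃, hw₀₁⟩ := hPw x _ (runSteps_nonneg Pu x le_rfl)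
  set r := runSteps Pw x (runSteps Pu x 0)
  have hr₂₃ : r 2 - r 3 = w x := by
    simpa [hu₂₃ 2 (by decide) (by decide) (by decide),
      hu₂₃ 3 (by decide) (by decide) (by decide)] using hw₂₃
  have hr₀₁ : r 0 - r 1 = u x := by
    simpa [hw₀₁ 0 (by decide) (by decide) (by decide),
      hw₀₁ 1 (by decide) (by decide) (by decide)] using hu₀₁
  rw [← relu_two_mul_sub_relu_sub_sub (relu_nonneg _)]
  simp only [π, clampSteps, runSteps_append, runSteps_cons, runSteps_nil, RegisterStep.exec,
    LinearMap.zero_apply, LinearMap.sub_apply, LinearMap.add_apply, LinearMap.smul_apply,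
    LinearMap.coe_proj, Function.eval, Function.update_self, ne_eq, Fin.reduceEq,
    not_false_eq_true, Function.update_of_ne, zero_add, add_zero, smul_eq_mul]
  rw [hr₂₃, show relu (w x) - r 0 + r 1 = relu (w x) - u x by linarith]

end ShallowNetsAsPrograms

section Density

open Set

lemma exists_isShallowNet_interpolant {ψ : ℝ → ℝ} {a c h ε : ℝ} (hh : 0 < h)
    (hψ : ∀ s ∈ Icc a c, ∀ t ∈ Icc a c, |s - t| ≤ h → |ψ s - ψ t| ≤ ε) (k : ℕ)
    (hk : a + k * h ≤ c) :
    ∃ v, IsShallowNet v ∧ (∀ t ∈ Icc a (a + k * h), |ψ t - v t| ≤ ε) ∧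
      ∀ t, a + k * h ≤ t → v t = ψ (a + k * h) := by
  induction k with
  | zero =>
    have ha : a ∈ Icc a c := ⟨le_rfl, by simpa using hk⟩
    refine ⟨fun _ => ψ a, .const _, fun t ht => ?_, fun t _ => by simp⟩
    obtain rfl : t = a := by simpa using ht
    exact hψ t ha t ha (by simp [hh.le])
  | succ k ih =>
    set b := a + k * h
    have hb' : a + ↑(k + 1) * h = b + h := by push_cast; ring
    rw [hb'] at hk ⊢
    obtain ⟨v, hv, hvb, hvc⟩ := ih (by linarith)
    set s := (ψ (b + h) - ψ b) / h
    refine ⟨fun t => v t + s * relu (t - b) + -s * relu (t - (b + h)), ?_,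
      fun t ht => ?_, fun t ht => ?_⟩
    · simpa [sub_eq_add_neg] using
        (hv.add_neuron (.id ℝ ℝ) (-b) s).add_neuron (.id ℝ ℝ) (-(b + h)) (-s)
    · have hab : a ≤ b := le_add_of_nonneg_right (by positivity)
      beta_reduce
      rcases le_total t b with htb | htb
      · rw [relu_of_nonpos (x := t - b) (by linarith), relu_of_nonpos (by linarith)]
        simpa using hvb t ⟨ht.1, htb⟩
      · rw [relu_of_nonneg (x := t - b) (by linarith), relu_of_nonpos (by linarith [ht.2]),
          hvc t htb]
        have h₁ := hψ t ⟨by linarith, by linarith [ht.2]⟩ b ⟨hab, by linarith⟩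
          (by rw [abs_of_nonneg (by linarith)]; linarith [ht.2])
        have h₂ := hψ t ⟨by linarith, by linarith [ht.2]⟩ (b + h) ⟨by linarith, hk⟩
          (by rw [abs_of_nonpos (by linarith [ht.2])]; linarith)
        -- on `[b, b + h]` the interpolant is a convex combination of `ψ b` and `ψ (b + h)`
        set l := (t - b) / h
        have hl₀ : 0 ≤ l := div_nonneg (by linarith) hh.le
        have hl₁ : l ≤ 1 := div_le_one_of_le₀ (by linarith [ht.2]) hh.le
        have : ψ b + s * (t - b) + -s * 0 = (1 - l) * ψ b + l * ψ (b + h) := by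
          simp only [s, l]; ring
        rw [this]
        rw [abs_le] at h₁ h₂ ⊢
        constructor <;> nlinarith
    · beta_reduce
      rw [relu_of_nonneg (x := t - b) (by linarith), relu_of_nonneg (by linarith),
        hvc t (by linarith)]
      simp only [s]
      field_simp
      ring

theorem exists_isShallowNet_abs_sub_le_of_continuousOn {ψ : ℝ → ℝ} {a c : ℝ}
    (hψ : ContinuousOn ψ (Icc a c)) {ε : ℝ} (hε : 0 < ε) :
    ∃ v, IsShallowNet v ∧ ∀ t ∈ Icc a c, |ψ t - v t| ≤ ε := by
  rcases le_or_gt c a with hca | hac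
  · refine ⟨fun _ => ψ a, .const _, fun t ht => ?_⟩
    obtain rfl : t = a := le_antisymm (ht.2.trans hca) ht.1
    simpa using hε.le
  obtain ⟨δ, hδ, hψδ⟩ := Metric.uniformContinuousOn_iff_le.1
    (isCompact_Icc.uniformContinuousOn_of_continuous hψ) ε hε
  obtain ⟨k, hk⟩ := exists_nat_gt ((c - a) / δ)
  have hk₀ : (0 : ℝ) < k := (div_pos (sub_pos.2 hac) hδ).trans hk
  have hkc : a + k * ((c - a) / k) = c := by field_simp; ring
  have hkδ : (c - a) / k ≤ δ :=
    (div_le_iff₀ hk₀).2 (by rw [div_lt_iff₀ hδ, mul_comm] at hk; exact hk.le)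
  obtain ⟨v, hv, hvψ, -⟩ := exists_isShallowNet_interpolant (div_pos (sub_pos.2 hac) hk₀)
    (fun s hs t ht hst => by
      simpa [Real.dist_eq] using hψδ s hs t ht (by simpa [Real.dist_eq] using hst.trans hkδ))
    k hkc.le
  exact ⟨v, hv, by rwa [hkc] at hvψ⟩

variable {E : Type*} [NormedAddCommGroup E] [NormedSpace ℝ E]

def shallowOn (K : Set E) : Submodule ℝ C(K, ℝ) where
  carrier := {g | ∃ u : E → ℝ, IsShallowNet u ∧ ∀ x, g x = u x}
  zero_mem' := ⟨fun _ => 0, .zero, fun _ => rfl⟩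
  add_mem' := by
    rintro _ _ ⟨u, hu, hgu⟩ ⟨v, hv, hgv⟩
    exact ⟨_, hu.add hv, fun x => by simp [hgu, hgv]⟩
  smul_mem' := by
    rintro a _ ⟨u, hu, hgu⟩
    exact ⟨_, hu.const_mul a, fun x => by simp [hgu]⟩

variable {K : Set E} [CompactSpace K]

lemma mem_closure_shallowOn_iff {g : C(K, ℝ)} :
    g ∈ (shallowOn K).topologicalClosure ↔
      ∀ ε > 0, ∃ u : E → ℝ, IsShallowNet u ∧ ∀ x : K, |g x - u x| < ε := by
  rw [← SetLike.mem_coe, Submodule.topologicalClosure_coe, Metric.mem_closure_iff]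
  refine forall₂_congr fun ε hε => ⟨?_, ?_⟩
  · rintro ⟨_, ⟨u, hu, hu'⟩, hgu⟩
    exact ⟨u, hu, fun x => by
      simpa [hu', Real.dist_eq] using (ContinuousMap.dist_lt_iff hε).1 hgu x⟩
  · rintro ⟨u, hu, hgu⟩
    exact ⟨⟨fun x => u x, hu.continuous.comp continuous_subtype_val⟩, ⟨u, hu, fun _ => rfl⟩,
      (ContinuousMap.dist_lt_iff hε).2 fun x => by simpa [Real.dist_eq] using hgu x⟩

lemma comp_mem_closure_shallowOn {ψ : ℝ → ℝ} (hψ : Continuous ψ) (ℓ : E →L[ℝ] ℝ) :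
    (⟨fun x => ψ (ℓ x), by fun_prop⟩ : C(K, ℝ)) ∈ (shallowOn K).topologicalClosure := by
  rw [mem_closure_shallowOn_iff]
  intro ε hε
  obtain ⟨C, hC⟩ := (isCompact_iff_compactSpace.2 ‹_›).exists_bound_of_continuousOn
    ℓ.continuous.continuousOn
  obtain ⟨v, hv, hvψ⟩ := exists_isShallowNet_abs_sub_le_of_continuousOn (a := -C) (c := C)
    hψ.continuousOn (half_pos hε)
  refine ⟨fun x => v (ℓ x), by simpa using hv.comp_affine ℓ 0, fun x => ?_⟩
  exact (hvψ _ (abs_le.1 (hC x x.2))).trans_lt (half_lt_self hε)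

def expRidges (K : Set E) : Submonoid C(K, ℝ) where
  carrier := range fun ℓ : E →L[ℝ] ℝ => ⟨fun x => Real.exp (ℓ x), by fun_prop⟩
  mul_mem' := by
    rintro _ _ ⟨ℓ₁, rfl⟩ ⟨ℓ₂, rfl⟩
    exact ⟨ℓ₁ + ℓ₂, by ext; simp [Real.exp_add]⟩
  one_mem' := ⟨0, by ext; simp⟩

theorem exists_isShallowNet_abs_sub_lt {K : Set E} (hK : IsCompact K) {f : E → ℝ}
    (hf : ContinuousOn f K) {ε : ℝ} (hε : 0 < ε) :
    ∃ u : E → ℝ, IsShallowNet u ∧ ∀ x ∈ K, |f x - u x| < ε := by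
  have : CompactSpace K := isCompact_iff_compactSpace.1 hK
  let A := Algebra.adjoin ℝ (expRidges K : Set C(K, ℝ))
  have hA : A.SeparatesPoints := by
    intro x y hxy
    obtain ⟨ℓ, hℓ⟩ :=
      SeparatingDual.exists_separating_of_ne (R := ℝ) (Subtype.coe_injective.ne hxy)
    exact ⟨_, ⟨_, Algebra.subset_adjoin ⟨ℓ, rfl⟩, rfl⟩, by simpa using hℓ⟩
  have hAS : (A : Set C(K, ℝ)) ⊆ (shallowOn K).topologicalClosure := by
    rw [← Subalgebra.coe_toSubmodule, Algebra.adjoin_eq_span, Submonoid.closure_eq]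
    exact Submodule.span_le.2 fun _ ⟨ℓ, hℓ⟩ =>
      hℓ ▸ comp_mem_closure_shallowOn Real.continuous_exp ℓ
  have hfK : ⟨fun x : K => f x, hf.domRestrict⟩ ∈ (shallowOn K).topologicalClosure := by
    refine closure_minimal hAS (Submodule.isClosed_topologicalClosure _) ?_
    rw [← Subalgebra.topologicalClosure_coe,
      ContinuousMap.subalgebra_topologicalClosure_eq_top_of_separatesPoints A hA]
    trivial
  obtain ⟨u, hu, hfu⟩ := mem_closure_shallowOn_iff.1 hfK ε hε
  exact ⟨u, hu, fun x hx => hfu ⟨x, hx⟩⟩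

end Density

section Lp

open Metric Set

variable {n : ℕ}

lemma exists_isShallowNet_cutoff {R : ℝ} (hR : 0 ≤ R) {A : ℝ} (hA : 0 ≤ A) :
    ∃ w : (Fin n → ℝ) → ℝ, IsShallowNet w ∧ (∀ x ∈ closedBall 0 R, w x = A) ∧
      ∀ x ∉ closedBall 0 (R + 1), w x ≤ 0 := by
  let excess : (Fin n → ℝ) → ℝ := fun x => ∑ i, (relu (x i - R) + relu (-x i - R))
  have hexcess : IsShallowNet excess := by
    let π : Fin n → (Fin n → ℝ) →L[ℝ] ℝ := ContinuousLinearMap.proj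
    simpa [excess, π, sub_eq_add_neg] using IsShallowNet.sum Finset.univ fun i _ =>
      (IsShallowNet.neuron (π i) (-R) 1).add (IsShallowNet.neuron (-π i) (-R) 1)
  refine ⟨fun x => A + -A * excess x, (IsShallowNet.const A).add (hexcess.const_mul (-A)),
    fun x hx => ?_, fun x hx => ?_⟩
  · have : excess x = 0 := Finset.sum_eq_zero fun i _ => by
      obtain ⟨h₁, h₂⟩ :=
        abs_le.1 ((norm_le_pi_norm x i).trans (mem_closedBall_zero_iff.1 hx))
      rw [relu_of_nonpos (by linarith), relu_of_nonpos (by linarith), add_zero]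
    simp [this]
  · obtain ⟨i, hi⟩ : ∃ i, R + 1 < |x i| := by
      simpa [mem_closedBall_zero_iff, pi_norm_le_iff_of_nonneg (by linarith : 0 ≤ R + 1)]
        using hx
    have hi' : 1 ≤ relu (x i - R) + relu (-x i - R) := by
      rcases abs_cases (x i) with ⟨h, -⟩ | ⟨h, -⟩ <;>
        linarith [le_relu (x i - R), le_relu (-x i - R), relu_nonneg (x i - R),
          relu_nonneg (-x i - R)]
    have : 1 ≤ excess x := hi'.trans (Finset.single_le_sum (f := fun i =>
      relu (x i - R) + relu (-x i - R)) (fun j _ => add_nonneg (relu_nonneg _) (relu_nonneg _))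
      (Finset.mem_univ i))
    nlinarith

theorem exists_computableWithWidth_abs_sub_le_indicator {g : (Fin n → ℝ) → ℝ}
    (hg : Continuous g) {R : ℝ} (hR : 0 ≤ R) (hgR : Function.support g ⊆ closedBall 0 R)
    {δ : ℝ} (hδ : 0 < δ) :
    ∃ h, ComputableWithWidth (2 * n + 6) h ∧
      ∀ x, |g x - h x| ≤ (closedBall 0 (R + 1)).indicator (fun _ => δ) x := by
  obtain ⟨A, hA⟩ := (isCompact_closedBall (0 : Fin n → ℝ) R).exists_bound_of_continuousOn
    hg.continuousOn
  obtain ⟨w, hw, hwA, hw₀⟩ := exists_isShallowNet_cutoff (n := n) hR (le_max_right A 0)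
  obtain ⟨u, hu, hgu⟩ := exists_isShallowNet_abs_sub_lt (isCompact_closedBall 0 (R + 1))
    hg.continuousOn hδ
  refine ⟨_, hu.computableWithWidth_clamp hw, fun x => ?_⟩
  by_cases hx : x ∈ closedBall 0 (R + 1)
  · rw [indicator_of_mem hx]
    refine (abs_sub_clamp_le ?_).trans (hgu x hx).le
    by_cases hxR : x ∈ closedBall 0 R
    · rw [hwA x hxR, relu_of_nonneg (le_max_right A 0), ← Real.norm_eq_abs]
      exact (hA x hxR).trans (le_max_left A 0)
    · rw [Function.notMem_support.1 fun h => hxR (hgR h), abs_zero]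
      exact relu_nonneg _
  · have hg₀ : g x = 0 :=
      Function.notMem_support.1 fun h => hx (closedBall_subset_closedBall (by linarith) (hgR h))
    rw [indicator_of_notMem hx, hg₀, relu_of_nonpos (hw₀ x hx), clamp_zero, sub_zero, abs_zero]

lemma exists_pos_eLpNorm_indicator_const_lt {α : Type*} [MeasurableSpace α] {μ : Measure α}
    {s : Set α} (hs : μ s ≠ ⊤) (p : ENNReal) {ε : ENNReal} (hε : ε ≠ 0) :
    ∃ δ : ℝ, 0 < δ ∧ eLpNorm (s.indicator fun _ => δ) p μ < ε := by
  obtain ⟨δ, hδ, hδs⟩ := ENNReal.exists_nnreal_pos_mul_lt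
    (ENNReal.rpow_ne_top_of_nonneg (one_div_nonneg.2 ENNReal.toReal_nonneg) hs) hε
  exact ⟨δ, hδ, (eLpNorm_indicator_const_le _ _).trans_lt (by simpa using hδs)⟩

theorem MeasureTheory.MemLp.exists_computableWithWidth_eLpNorm_sub_lt {p : ENNReal}
    (hp₁ : 1 ≤ p) (hp : p ≠ ⊤) {f : (Fin n → ℝ) → ℝ} (hf : MemLp f p volume) {ε : ℝ}
    (hε : 0 < ε) :
    ∃ h, ComputableWithWidth (2 * n + 6) h ∧ eLpNorm (f - h) p volume < ENNReal.ofReal ε := by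
  have hε₂ : ENNReal.ofReal (ε / 2) ≠ 0 := by simpa using hε
  obtain ⟨g, hg_supp, hfg, hg, -⟩ := hf.exists_hasCompactSupport_eLpNorm_sub_le hp hε₂
  obtain ⟨R, hR, hgR⟩ := hg_supp.isBounded.subset_closedBall_lt 0 0
  obtain ⟨δ, hδ, hδε⟩ := exists_pos_eLpNorm_indicator_const_lt
    (measure_closedBall_lt_top (μ := volume) (x := (0 : Fin n → ℝ)) (r := R + 1)).ne p hε₂
  obtain ⟨h, hh, hgh⟩ := exists_computableWithWidth_abs_sub_le_indicator hg hR.le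
    ((subset_tsupport g).trans hgR) hδ
  refine ⟨h, hh, ?_⟩
  calc eLpNorm (f - h) p volume = eLpNorm ((f - g) + (g - h)) p volume := by
        rw [sub_add_sub_cancel]
    _ ≤ eLpNorm (f - g) p volume + eLpNorm (g - h) p volume :=
        eLpNorm_add_le (hf.aestronglyMeasurable.sub hg.aestronglyMeasurable)
          (hg.sub hh.continuous).aestronglyMeasurable hp₁
    _ < ENNReal.ofReal (ε / 2) + ENNReal.ofReal (ε / 2) :=
        ENNReal.add_lt_add_of_le_of_lt (hfg.trans_lt ENNReal.ofReal_lt_top).ne hfg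
          ((eLpNorm_mono_real fun x => hgh x).trans_lt hδε)
    _ = ENNReal.ofReal ε := by
        rw [← ENNReal.ofReal_add (by positivity) (by positivity), add_halves]

end Lp

theorem stmt_11_general (n₀ : ℕ) :
    (∀ p : ℝ, 1 ≤ p → ∀ f : (Fin n₀ → ℝ) → ℝ,
      MemLp f (ENNReal.ofReal p) volume → ∀ ε : ℝ, 0 < ε →
        ∃ (Lc : ℕ) (g : (Fin n₀ → ℝ) → Fin 1 → ℝ),
          Computes n₀ (List.replicate Lc (2 * n₀ + 6)) 1 g ∧
          eLpNorm (fun x => f x - g x 0) (ENNReal.ofReal p) volume < ENNReal.ofReal ε) ∧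
    (∀ K : Set (Fin n₀ → ℝ), IsCompact K → ∀ f : (Fin n₀ → ℝ) → ℝ, ContinuousOn f K →
      ∀ ε : ℝ, 0 < ε →
        ∃ (Lc : ℕ) (g : (Fin n₀ → ℝ) → Fin 1 → ℝ),
          Computes n₀ (List.replicate Lc (2 * n₀ + 6)) 1 g ∧
          ∀ x ∈ K, |f x - g x 0| < ε) := by
  refine ⟨fun p hp f hf ε hε => ?_, fun K hK f hf ε hε => ?_⟩
  · obtain ⟨h, ⟨L, g, hg, hgh⟩, hfh⟩ := hf.exists_computableWithWidth_eLpNorm_sub_lt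
      (ENNReal.one_le_ofReal.2 hp) ENNReal.ofReal_ne_top hε
    exact ⟨L, g, hg, by simpa [hgh, Pi.sub_def] using hfh⟩
  · obtain ⟨u, hu, hfu⟩ := exists_isShallowNet_abs_sub_lt hK hf hε
    obtain ⟨L, g, hg, hgu⟩ := hu.computableWithWidth
    exact ⟨L, g, hg, fun x hx => by simpa [hgu] using hfu x hx⟩

/-- universal approximation in `L^p(ℝ^{n₀})` for `p ∈ [1,∞)` and in `C(K)`
by ReLU networks of width `2n₀ + 6`. -/
theorem stmt_11 (n₀ : ℕ) (h₀ : 1 ≤ n₀) :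
    (∀ p : ℝ, 1 ≤ p → ∀ f : (Fin n₀ → ℝ) → ℝ,
      MemLp f (ENNReal.ofReal p) volume → ∀ ε : ℝ, 0 < ε →
        ∃ (Lc : ℕ) (g : (Fin n₀ → ℝ) → Fin 1 → ℝ),
          Computes n₀ (List.replicate Lc (2 * n₀ + 6)) 1 g ∧
          eLpNorm (fun x => f x - g x 0) (ENNReal.ofReal p) volume < ENNReal.ofReal ε) ∧
    (∀ K : Set (Fin n₀ → ℝ), IsCompact K → ∀ f : (Fin n₀ → ℝ) → ℝ, ContinuousOn f K →
      ∀ ε : ℝ, 0 < ε →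
        ∃ (Lc : ℕ) (g : (Fin n₀ → ℝ) → Fin 1 → ℝ),
          Computes n₀ (List.replicate Lc (2 * n₀ + 6)) 1 g ∧
          ∀ x ∈ K, |f x - g x 0| < ε) :=
  stmt_11_general n₀
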